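/- Let N ≥ 2 and let a, b ∈ {1,…,N−1} satisfy ab ≡ 1 (mod N). Then W(a,N) and W(b,N) have the same length l, and W(a,N)_i = W(b,N)_{l+1−i} for i = 1,…,l; that is, W(b,N) is the reversal of W(a,N). -/

import Mathlib

/-- The matrix `M(α) = !![0, -1; 1, α]`. -/
def Mmat (a : ℤ) : Matrix (Fin 2) (Fin 2) ℤ := !![0, -1; 1, a]

/-- `IsW a N L` says that `L` is the word `W(a,N)`: a nonempty finite sequence of
integers `≥ 2` whose `M`-product is the matrix `!![-x, -y; a, N]` where
`y ∈ {1,…,N-1}` satisfies `a*y ≡ 1 (mod N)` and `x = (a*y-1)/N`. -/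
def IsW (a N : ℤ) (L : List ℤ) : Prop :=
  L ≠ [] ∧ (∀ x ∈ L, 2 ≤ x) ∧
  ∃ y : ℤ, 1 ≤ y ∧ y ≤ N - 1 ∧ a * y ≡ 1 [ZMOD N] ∧
    (L.map Mmat).prod = !![-((a * y - 1) / N), -y; a, N]

/-!
Conjugating by `D = diag(1, -1)` turns `M(α)ᵀ` back into `M(α)`, so the word product of the
reversed word is `D Pᵀ D`; for `P = !![-x, -b; a, N]` this is `!![-x, -a; b, N]`, the product
shape required of `W(b,N)`. It remains to see that a word with letters `≥ 2` is determined by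
its product: the bottom row `(r, s)` of the product satisfies `0 ≤ r < s`, and appending a
letter `α` maps it to `(s, sα - r)`, so the last letter is recovered by Euclidean division and
can then be cancelled.
-/

open Matrix

def Dmat : Matrix (Fin 2) (Fin 2) ℤ := !![1, 0; 0, -1]

lemma Dmat_mul_Dmat : Dmat * Dmat = 1 := by
  ext i j
  fin_cases i <;> fin_cases j <;> simp [Dmat]

lemma Dmat_mul_transpose_mul_Dmat (p q r s : ℤ) :
    Dmat * !![p, q; r, s]ᵀ * Dmat = !![p, -r; -q, s] := by
  ext i j
  simp only [Matrix.mul_apply, Fin.sum_univ_two, Matrix.transpose_apply]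
  fin_cases i <;> fin_cases j <;> simp [Dmat]

lemma Dmat_mul_transpose_Mmat_mul_Dmat (α : ℤ) : Dmat * (Mmat α)ᵀ * Dmat = Mmat α := by
  simp [Mmat, Dmat_mul_transpose_mul_Dmat]

lemma prod_map_Mmat_reverse (L : List ℤ) :
    (L.reverse.map Mmat).prod = Dmat * (L.map Mmat).prodᵀ * Dmat := by
  induction L with
  | nil => simp [Dmat_mul_Dmat]
  | cons α L ih =>
    calc (((α :: L).reverse).map Mmat).prod
        = (Dmat * (L.map Mmat).prodᵀ * Dmat) * (Dmat * (Mmat α)ᵀ * Dmat) := by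
          rw [List.reverse_cons, List.map_append, List.prod_append, ih, List.map_singleton,
            List.prod_singleton, Dmat_mul_transpose_Mmat_mul_Dmat]
      _ = Dmat * (L.map Mmat).prodᵀ * (Dmat * Dmat) * (Mmat α)ᵀ * Dmat := by
          simp only [Matrix.mul_assoc]
      _ = Dmat * ((α :: L).map Mmat).prodᵀ * Dmat := by
          simp [Dmat_mul_Dmat, Matrix.mul_assoc]

lemma mul_Mmat_apply_one_zero (P : Matrix (Fin 2) (Fin 2) ℤ) (α : ℤ) :
    (P * Mmat α) 1 0 = P 1 1 := by
  simp [Mmat, Matrix.mul_apply]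

lemma mul_Mmat_apply_one_one (P : Matrix (Fin 2) (Fin 2) ℤ) (α : ℤ) :
    (P * Mmat α) 1 1 = P 1 1 * α - P 1 0 := by
  simp [Mmat, Matrix.mul_apply, sub_eq_add_neg, mul_comm, add_comm]

lemma isUnit_Mmat (α : ℤ) : IsUnit (Mmat α) := by
  rw [Matrix.isUnit_iff_isUnit_det]
  simp [Mmat, Matrix.det_fin_two_of]

lemma prod_map_Mmat_bottom_row {L : List ℤ} (hL : ∀ x ∈ L, 2 ≤ x) :
    0 ≤ (L.map Mmat).prod 1 0 ∧ (L.map Mmat).prod 1 0 < (L.map Mmat).prod 1 1 := by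
  induction L using List.reverseRecOn with
  | nil => simp
  | append_singleton L α ih =>
    have hα : 2 ≤ α := hL α (by simp)
    obtain ⟨hr, hrs⟩ := ih fun x hx => hL x (by simp [hx])
    simp only [List.map_append, List.map_singleton, List.prod_append, List.prod_singleton,
      mul_Mmat_apply_one_zero, mul_Mmat_apply_one_one]
    constructor <;> nlinarith

lemma prod_map_Mmat_ne_one {L : List ℤ} (hL : ∀ x ∈ L, 2 ≤ x) (hne : L ≠ []) :
    (L.map Mmat).prod ≠ 1 := by
  obtain ⟨K, α, rfl⟩ := L.eq_nil_or_concat'.resolve_left hne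
  intro h
  have h11 : (K.map Mmat).prod 1 1 = 0 := by
    simpa [mul_Mmat_apply_one_zero] using congrFun (congrFun h 1) 0
  have hK := prod_map_Mmat_bottom_row (L := K) fun x hx => hL x (by simp [hx])
  omega

lemma Int.eq_of_mul_sub_eq_mul_sub {s r₁ r₂ α β : ℤ} (hr₁ : 0 ≤ r₁) (hr₁s : r₁ < s)
    (hr₂ : 0 ≤ r₂) (hr₂s : r₂ < s) (h : s * α - r₁ = s * β - r₂) : α = β := by
  have hdvd : s ∣ r₂ - r₁ := ⟨β - α, by linarith⟩
  have hr : r₂ - r₁ = 0 := Int.eq_zero_of_abs_lt_dvd hdvd (abs_lt.mpr ⟨by linarith, by linarith⟩)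
  exact mul_left_cancel₀ (show s ≠ 0 by omega) (by linarith)

lemma prod_map_Mmat_injective {L₁ L₂ : List ℤ} (h₁ : ∀ x ∈ L₁, 2 ≤ x) (h₂ : ∀ x ∈ L₂, 2 ≤ x)
    (h : (L₁.map Mmat).prod = (L₂.map Mmat).prod) : L₁ = L₂ := by
  induction L₁ using List.reverseRecOn generalizing L₂ with
  | nil =>
    rcases eq_or_ne L₂ [] with rfl | hne
    · rfl
    · exact absurd h.symm (prod_map_Mmat_ne_one h₂ hne)
  | append_singleton K₁ α ih =>
    obtain rfl | ⟨K₂, β, rfl⟩ := L₂.eq_nil_or_concat'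
    · exact absurd h (prod_map_Mmat_ne_one h₁ (by simp))
    · have hK₁ : ∀ x ∈ K₁, 2 ≤ x := fun x hx => h₁ x (by simp [hx])
      have hK₂ : ∀ x ∈ K₂, 2 ≤ x := fun x hx => h₂ x (by simp [hx])
      simp only [List.map_append, List.map_singleton, List.prod_append,
        List.prod_singleton] at h
      have hs := congrFun (congrFun h 1) 0
      have ht := congrFun (congrFun h 1) 1
      rw [mul_Mmat_apply_one_zero, mul_Mmat_apply_one_zero] at hs
      rw [mul_Mmat_apply_one_one, mul_Mmat_apply_one_one] at ht
      obtain ⟨hr₁, hrs₁⟩ := prod_map_Mmat_bottom_row hK₁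
      obtain ⟨hr₂, hrs₂⟩ := prod_map_Mmat_bottom_row hK₂
      have hαβ : α = β := Int.eq_of_mul_sub_eq_mul_sub hr₁ hrs₁ hr₂ (hs ▸ hrs₂) (hs ▸ ht)
      subst hαβ
      rw [ih hK₁ hK₂ ((isUnit_Mmat α).mul_left_inj.mp h)]

lemma Int.ModEq.of_mul_modEq_one {N a y b : ℤ} (hy : a * y ≡ 1 [ZMOD N])
    (hb : a * b ≡ 1 [ZMOD N]) : y ≡ b [ZMOD N] :=
  calc y = y * 1 := (mul_one y).symm
    _ ≡ y * (a * b) [ZMOD N] := (hb.mul_left y).symm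
    _ = b * (a * y) := by ring
    _ ≡ b * 1 [ZMOD N] := hy.mul_left b
    _ = b := mul_one b

lemma Int.ModEq.eq_of_mem_Ico {N y b : ℤ} (h : y ≡ b [ZMOD N]) (hy : y ∈ Set.Ico 0 N)
    (hb : b ∈ Set.Ico 0 N) : y = b := by
  rwa [Int.ModEq, Int.emod_eq_of_lt hy.1 hy.2, Int.emod_eq_of_lt hb.1 hb.2] at h

theorem stmt15_general (N a b : ℤ) (ha : 1 ≤ a) (ha' : a ≤ N - 1)
    (hb : 1 ≤ b) (hb' : b ≤ N - 1) (hab : a * b ≡ 1 [ZMOD N])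
    (L L' : List ℤ) (hL : IsW a N L) (hL' : IsW b N L') :
    L' = L.reverse := by
  obtain ⟨-, hL_ge, y, hy1, hy2, hay, hLprod⟩ := hL
  obtain ⟨-, hL'_ge, z, hz1, hz2, hbz, hL'prod⟩ := hL'
  have hyb : y = b := (hay.of_mul_modEq_one hab).eq_of_mem_Ico ⟨by omega, by omega⟩
    ⟨by omega, by omega⟩
  have hza : z = a := (hbz.of_mul_modEq_one (mul_comm a b ▸ hab)).eq_of_mem_Ico
    ⟨by omega, by omega⟩ ⟨by omega, by omega⟩
  subst hyb hza
  refine prod_map_Mmat_injective hL'_ge (by simpa using hL_ge) ?_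
  rw [prod_map_Mmat_reverse, hLprod, hL'prod, Dmat_mul_transpose_mul_Dmat, mul_comm]
  simp

theorem stmt15 (N a b : ℤ) (hN : 2 ≤ N) (ha : 1 ≤ a) (ha' : a ≤ N - 1)
    (hb : 1 ≤ b) (hb' : b ≤ N - 1) (hab : a * b ≡ 1 [ZMOD N])
    (L L' : List ℤ) (hL : IsW a N L) (hL' : IsW b N L') :
    L' = L.reverse :=
  stmt15_general N a b ha ha' hb hb' hab L L' hL hL'
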